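/- arXiv:2111.03628 — 5 statements merged into one kernel-verified Lean document; each statement's English description precedes it below -/
import Mathlib

section
/- For jointly distributed random variables indexed by a finite set Z, the set function S ↦ I(S; Z \ S) (mutual information between variables in S and variables in its complement) is submodular: for S ⊆ S′ ⊆ Z and i ∈ Z \ S′, I(S∪{i}; Z\(S∪{i})) − I(S; Z\S) ≥ I(S′∪{i}; Z\(S′∪{i})) − I(S′; Z\S′). -/
/-- For a monotone submodular entropy H with H(∅)=0, the set function
S ↦ I(S; Z\S) = H(S) + H(Sᶜ) − H(Z) is submodular. -/
theorem mutual_information_submodular {α : Type*} [Fintype α] [DecidableEq α]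
    (H : Finset α → ℝ) (h0 : H ∅ = 0)
    (hmono : ∀ A B : Finset α, A ⊆ B → H A ≤ H B)
    (hsub : ∀ A B : Finset α, A ⊆ B → ∀ i ∉ B,
      H (insert i B) - H B ≤ H (insert i A) - H A)
    (S S' : Finset α) (hSS : S ⊆ S') (i : α) (hi : i ∉ S') :
    (H (insert i S') + H (insert i S')ᶜ - H Finset.univ) -
        (H S' + H S'ᶜ - H Finset.univ) ≤
      (H (insert i S) + H (insert i S)ᶜ - H Finset.univ) -
        (H S + H Sᶜ - H Finset.univ) := by
  have hiS : i ∉ S := fun h => hi (hSS h)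
  have h1 : H (insert i S') - H S' ≤ H (insert i S) - H S := hsub S S' hSS i hi
  -- complements
  have hc1 : (insert i S)ᶜ = Sᶜ \ {i} := by
    ext x; simp [Finset.mem_compl, Finset.mem_sdiff, not_or, and_comm]
  have hc2 : (insert i S')ᶜ = S'ᶜ \ {i} := by
    ext x; simp [Finset.mem_compl, Finset.mem_sdiff, not_or, and_comm]
  have hsubset : S'ᶜ \ {i} ⊆ Sᶜ \ {i} := by
    intro x hx
    simp only [Finset.mem_sdiff, Finset.mem_compl, Finset.mem_singleton] at hx ⊢
    exact ⟨fun h => hx.1 (hSS h), hx.2⟩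
  have hiB : i ∉ Sᶜ \ {i} := by simp
  have h2 := hsub (S'ᶜ \ {i}) (Sᶜ \ {i}) hsubset i hiB
  have e1 : insert i (Sᶜ \ {i}) = Sᶜ := by
    rw [Finset.sdiff_singleton_eq_erase, Finset.insert_erase (Finset.mem_compl.2 hiS)]
  have e2 : insert i (S'ᶜ \ {i}) = S'ᶜ := by
    rw [Finset.sdiff_singleton_eq_erase, Finset.insert_erase (Finset.mem_compl.2 hi)]
  rw [e1, e2] at h2
  rw [hc1, hc2]
  linarith
end

section
/- Let H be the differential entropy set function of a multivariate Gaussian with positive definite covariance κ: H(S) = ½ ln((2πe)^{|S|} det κ(S,S)). Then H is submodular on subsets of {1,…,n}. -/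
/-!
Adding `i` to `T` multiplies `det κ(T,T)` by the Schur complement
`σ²(i | T) = κᵢᵢ - κ(i,T) κ(T,T)⁻¹ κ(T,i)`, so `H(T ∪ {i}) - H(T) = ½ ln (2πe σ²(i | T))` and
submodularity says that `σ²(i | T)` decreases as `T` grows. This follows from the variational
formula `vᵀ A⁻¹ v = max_z (2 zᵀ v - zᵀ A z)` for positive definite `A`: the maximiser for `T`,
extended by zero, is a competitor for any `T' ⊇ T`.
-/

namespace Matrix

section Variational

variable {m m' R : Type*} [Fintype m] [Fintype m']

theorem extend_zero_dotProduct [NonUnitalNonAssocSemiring R] {e : m → m'}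
    (he : e.Injective) (u : m → R) (x : m' → R) :
    Function.extend e u 0 ⬝ᵥ x = u ⬝ᵥ (x ∘ e) := by
  classical
  rw [dotProduct, ← Finset.sum_subset (Finset.subset_univ (Finset.univ.map ⟨e, he⟩)),
    Finset.sum_map]
  · simp [dotProduct, he.extend_apply]
  · intro j _ hj
    rw [Function.extend_apply' _ _ _ fun ⟨a, ha⟩ ↦ hj (by simp [← ha]), Pi.zero_apply, zero_mul]

theorem extend_zero_dotProduct_mulVec [CommSemiring R] {e : m → m'} (he : e.Injective)
    (M : Matrix m' m' R) (u : m → R) :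
    Function.extend e u 0 ⬝ᵥ (M *ᵥ Function.extend e u 0) = u ⬝ᵥ (M.submatrix e e *ᵥ u) := by
  rw [extend_zero_dotProduct he]
  congr 1
  funext a
  rw [Function.comp_apply, mulVec, dotProduct_comm, extend_zero_dotProduct he, dotProduct_comm]
  rfl

variable [DecidableEq m] [DecidableEq m']

theorem PosDef.two_mul_dotProduct_sub_le {A : Matrix m m ℝ} (hA : A.PosDef) (v z : m → ℝ) :
    2 * (z ⬝ᵥ v) - z ⬝ᵥ (A *ᵥ z) ≤ v ⬝ᵥ (A⁻¹ *ᵥ v) := by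
  set p := A⁻¹ *ᵥ v
  have hAp : A *ᵥ p = v := by
    rw [mulVec_mulVec, mul_nonsing_inv _ hA.det_pos.ne'.isUnit, one_mulVec]
  have hsymm : p ⬝ᵥ (A *ᵥ z) = z ⬝ᵥ (A *ᵥ p) := by
    rw [dotProduct_mulVec, ← mulVec_transpose, (isHermitian_iff_isSymm.mp hA.isHermitian).eq,
      dotProduct_comm]
  have h := hA.posSemidef.dotProduct_mulVec_nonneg (z - p)
  simp only [star_trivial, mulVec_sub, dotProduct_sub, sub_dotProduct] at h
  rw [hsymm, hAp] at h
  linarith [dotProduct_comm p v]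

theorem PosDef.dotProduct_submatrix_inv_mulVec_le {M : Matrix m' m' ℝ} (hM : M.PosDef)
    {e : m → m'} (he : e.Injective) (w : m' → ℝ) :
    (w ∘ e) ⬝ᵥ ((M.submatrix e e)⁻¹ *ᵥ (w ∘ e)) ≤ w ⬝ᵥ (M⁻¹ *ᵥ w) := by
  set u := (M.submatrix e e)⁻¹ *ᵥ (w ∘ e)
  have hAu : M.submatrix e e *ᵥ u = w ∘ e := by
    rw [mulVec_mulVec, mul_nonsing_inv _ (hM.submatrix he).det_pos.ne'.isUnit, one_mulVec]
  have h := hM.two_mul_dotProduct_sub_le w (Function.extend e u 0)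
  rw [extend_zero_dotProduct he, extend_zero_dotProduct_mulVec he, hAu, dotProduct_comm u] at h
  linarith

end Variational

section SchurComplement

variable {ι R : Type*}

abbrev principalSubmatrix (M : Matrix ι ι R) (T : Finset ι) : Matrix T T R :=
  M.submatrix (↑) (↑)

variable [DecidableEq ι]

/-- Only meaningful for `i ∉ T`; for a covariance matrix it is the conditional variance of
coordinate `i` given the coordinates in `T`. -/
noncomputable def schurComplement [CommRing R] (M : Matrix ι ι R) (T : Finset ι) (i : ι) : R :=
  M i i - (fun t : T ↦ M i t) ⬝ᵥ ((M.principalSubmatrix T)⁻¹ *ᵥ fun t : T ↦ M t i)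

theorem det_principalSubmatrix_insert [CommRing R] (M : Matrix ι ι R) {T : Finset ι} {i : ι}
    (hi : i ∉ T) (hT : IsUnit (M.principalSubmatrix T).det) :
    (M.principalSubmatrix (insert i T)).det =
      (M.principalSubmatrix T).det * M.schurComplement T i := by
  let e := (Finset.subtypeInsertEquivOption hi).trans (Equiv.optionEquivSumPUnit.{0} _)
  let _ := invertibleOfIsUnitDet _ hT
  have hblock : (M.principalSubmatrix (insert i T)).submatrix e.symm e.symm =
      fromBlocks (M.principalSubmatrix T) (replicateCol Unit fun t : T ↦ M t i)
        (replicateRow Unit fun t : T ↦ M i t) (of fun _ _ ↦ M i i) := by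
    ext (s | _) (t | _) <;> rfl
  rw [← det_submatrix_equiv_self e.symm, hblock, det_fromBlocks₁₁, det_unique (n := Unit),
    invOf_eq_nonsing_inv, ← replicateRow_vecMul]
  simp [schurComplement, dotProduct_mulVec]

theorem PosDef.schurComplement_pos {M : Matrix ι ι ℝ} (hM : M.PosDef) {T : Finset ι} {i : ι}
    (hi : i ∉ T) : 0 < M.schurComplement T i := by
  have hT := (hM.submatrix (Subtype.val_injective (p := (· ∈ T)))).det_pos
  have hdet := (hM.submatrix (Subtype.val_injective (p := (· ∈ insert i T)))).det_pos
  rw [det_principalSubmatrix_insert M hi hT.ne'.isUnit] at hdet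
  exact pos_of_mul_pos_right hdet hT.le

theorem PosDef.schurComplement_anti {M : Matrix ι ι ℝ} (hM : M.PosDef) {S S' : Finset ι}
    (hSS : S ⊆ S') (i : ι) : M.schurComplement S' i ≤ M.schurComplement S i := by
  have hrow : ∀ t, M i t = M t i := fun t ↦ (isHermitian_iff_isSymm.mp hM.isHermitian).apply t i
  simp only [schurComplement, hrow]
  exact sub_le_sub_left ((hM.submatrix Subtype.val_injective).dotProduct_submatrix_inv_mulVec_le
    (Set.inclusion_injective (Finset.coe_subset.mpr hSS)) fun t : S' ↦ M t i) _

end SchurComplement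

end Matrix

section GaussianEntropy

variable {ι : Type*} [DecidableEq ι]

noncomputable def gaussianEntropy (κ : Matrix ι ι ℝ) (S : Finset ι) : ℝ :=
  1 / 2 * Real.log ((2 * Real.pi * Real.exp 1) ^ S.card * (κ.principalSubmatrix S).det)

theorem gaussianEntropy_insert_sub {κ : Matrix ι ι ℝ} (hκ : κ.PosDef) {T : Finset ι} {i : ι}
    (hi : i ∉ T) :
    gaussianEntropy κ (insert i T) - gaussianEntropy κ T =
      1 / 2 * Real.log (2 * Real.pi * Real.exp 1 * κ.schurComplement T i) := by
  have hT := (hκ.submatrix (Subtype.val_injective (p := (· ∈ T)))).det_pos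
  rw [gaussianEntropy, gaussianEntropy, Finset.card_insert_of_notMem hi,
    Matrix.det_principalSubmatrix_insert κ hi hT.ne'.isUnit, pow_succ,
    mul_mul_mul_comm, Real.log_mul (by positivity)
      (mul_pos (by positivity) (hκ.schurComplement_pos hi)).ne']
  ring

end GaussianEntropy

/-- The Gaussian differential-entropy set function
H(S) = ½ ln((2πe)^{|S|} det κ(S,S)) is submodular for positive definite κ. -/
theorem gaussian_entropy_submodular (n : ℕ) (κ : Matrix (Fin n) (Fin n) ℝ)
    (hκ : κ.PosDef) (H : Finset (Fin n) → ℝ)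
    (hH : ∀ S : Finset (Fin n), H S = (1 / 2) * Real.log
      ((2 * Real.pi * Real.exp 1) ^ S.card *
        (κ.submatrix (fun a : S => (a : Fin n)) (fun a : S => (a : Fin n))).det))
    (S S' : Finset (Fin n)) (hSS : S ⊆ S') (i : Fin n) (hi : i ∉ S') :
    H (insert i S') - H S' ≤ H (insert i S) - H S := by
  obtain rfl : H = gaussianEntropy κ := funext hH
  rw [gaussianEntropy_insert_sub hκ hi, gaussianEntropy_insert_sub hκ fun h ↦ hi (hSS h)]
  gcongr
  · exact mul_pos (by positivity) (hκ.schurComplement_pos hi)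
  · exact hκ.schurComplement_anti hSS i
end

section
/- For a monotone nondecreasing submodular function f with f(∅)=0 on a finite ground set, the greedy algorithm selecting K elements achieves f(S_greedy) ≥ (1 − 1/e) · max_{|S|=K} f(S). -/
/-- Nemhauser–Wolsey–Fisher: for monotone submodular f with f(∅)=0, greedy
selection of K elements achieves at least (1 − 1/e) of the optimum over sets
of cardinality K. -/
theorem greedy_submodular_guarantee {α : Type*} [Fintype α] [DecidableEq α]
    (f : Finset α → ℝ) (h0 : f ∅ = 0)
    (hmono : ∀ A B : Finset α, A ⊆ B → f A ≤ f B)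
    (hsub : ∀ A B : Finset α, A ⊆ B → ∀ i ∉ B,
      f (insert i B) - f B ≤ f (insert i A) - f A)
    (K : ℕ) (Sel : ℕ → Finset α) (hSel0 : Sel 0 = ∅)
    (hstep : ∀ k < K, ∃ x ∉ Sel k, Sel (k + 1) = insert x (Sel k) ∧
      ∀ y ∉ Sel k, f (insert y (Sel k)) ≤ f (insert x (Sel k))) :
    ∀ T : Finset α, T.card = K → (1 - (Real.exp 1)⁻¹) * f T ≤ f (Sel K) := by
  intro T hT
  have hfT : 0 ≤ f T := by
    have := hmono ∅ T (Finset.empty_subset T); linarith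
  rcases Nat.eq_zero_or_pos K with hK0 | hKpos
  · subst hK0
    have hTe : T = ∅ := Finset.card_eq_zero.mp hT
    rw [hSel0, h0, hTe, h0, mul_zero]
  -- Telescoping submodularity bound
  have key : ∀ (A S : Finset α),
      f (A ∪ S) - f A ≤ ∑ y ∈ S \ A, (f (insert y A) - f A) := by
    intro A S
    induction S using Finset.induction_on with
    | empty => simp
    | @insert a s ha ih =>
      by_cases hA : a ∈ A
      · rw [Finset.union_insert, Finset.insert_eq_self.mpr (Finset.mem_union_left s hA),
          Finset.insert_sdiff_of_mem s hA]
        exact ih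
      · have haus : a ∉ A ∪ s := by simp [hA, ha]
        have h1 : f (insert a (A ∪ s)) - f (A ∪ s) ≤ f (insert a A) - f A :=
          hsub A (A ∪ s) Finset.subset_union_left a haus
        rw [Finset.union_insert, Finset.insert_sdiff_of_notMem s hA,
          Finset.sum_insert (by simp [Finset.mem_sdiff, ha])]
        linarith
  -- per-step contraction
  have step : ∀ k, k < K →
      f T - f (Sel (k + 1)) ≤ (1 - 1 / (K : ℝ)) * (f T - f (Sel k)) := by
    intro k hk
    obtain ⟨x, hx, hSel, hmax⟩ := hstep k hk
    set δ := f (Sel (k + 1)) - f (Sel k) with hδ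
    have hδ0 : 0 ≤ δ := by
      have := hmono (Sel k) (Sel (k + 1)) (by rw [hSel]; exact Finset.subset_insert _ _)
      linarith
    have hsum : ∑ y ∈ T \ Sel k, (f (insert y (Sel k)) - f (Sel k)) ≤ (K : ℝ) * δ := by
      calc ∑ y ∈ T \ Sel k, (f (insert y (Sel k)) - f (Sel k))
          ≤ ∑ _y ∈ T \ Sel k, δ := by
            apply Finset.sum_le_sum
            intro y hy
            have hy' : y ∉ Sel k := (Finset.mem_sdiff.mp hy).2
            have := hmax y hy'
            rw [hδ, hSel]; linarith
        _ = ((T \ Sel k).card : ℝ) * δ := by simp [mul_comm]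
        _ ≤ (K : ℝ) * δ := by
            apply mul_le_mul_of_nonneg_right _ hδ0
            exact_mod_cast hT ▸ Nat.cast_le.mpr (Finset.card_le_card (Finset.sdiff_subset))
    have hA : f T ≤ f (Sel k ∪ T) := hmono T _ Finset.subset_union_right
    have hkey := key (Sel k) T
    have hbound : f T - f (Sel k) ≤ (K : ℝ) * δ := by linarith
    have hKne : (K : ℝ) ≠ 0 := by positivity
    have : (1 / (K : ℝ)) * (f T - f (Sel k)) ≤ δ := by
      rw [div_mul_eq_mul_div, one_mul, div_le_iff₀ (by positivity)]
      linarith [hbound]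
    rw [hδ] at this
    have expand : (1 - 1 / (K : ℝ)) * (f T - f (Sel k))
        = (f T - f (Sel k)) - 1 / (K : ℝ) * (f T - f (Sel k)) := by ring
    rw [expand]
    linarith
  -- iterate
  have hKge : (1 : ℝ) / K ≤ 1 := by
    rw [div_le_one (by exact_mod_cast hKpos)]
    exact_mod_cast hKpos
  have hb0 : (0 : ℝ) ≤ 1 - 1 / K := by linarith
  have main : ∀ k, k ≤ K → f T - f (Sel k) ≤ (1 - 1 / (K : ℝ)) ^ k * f T := by
    intro k
    induction k with
    | zero => intro _; simp [hSel0, h0]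
    | succ n ihn =>
      intro hnk
      have hn : n < K := hnk
      have h1 := step n hn
      have h2 := ihn (Nat.le_of_lt hn)
      calc f T - f (Sel (n + 1)) ≤ (1 - 1 / (K : ℝ)) * (f T - f (Sel n)) := h1
        _ ≤ (1 - 1 / (K : ℝ)) * ((1 - 1 / (K : ℝ)) ^ n * f T) :=
            mul_le_mul_of_nonneg_left h2 hb0
        _ = (1 - 1 / (K : ℝ)) ^ (n + 1) * f T := by ring
  have hfinal := main K le_rfl
  -- (1 - 1/K)^K ≤ exp(-1)
  have hexp : (1 - 1 / (K : ℝ)) ^ K ≤ Real.exp (-1) := by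
    have h1 : (1 : ℝ) - 1 / K ≤ Real.exp (-(1 / K)) := by
      have := Real.add_one_le_exp (-(1 / (K : ℝ))); linarith
    calc (1 - 1 / (K : ℝ)) ^ K ≤ Real.exp (-(1 / K)) ^ K := pow_le_pow_left₀ hb0 h1 K
      _ = Real.exp ((K : ℝ) * -(1 / K)) := (Real.exp_nat_mul _ K).symm
      _ = Real.exp (-1) := by
          congr 1
          field_simp
  have hexpfT : (1 - 1 / (K : ℝ)) ^ K * f T ≤ Real.exp (-1) * f T :=
    mul_le_mul_of_nonneg_right hexp hfT
  rw [Real.exp_neg] at hexpfT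
  linarith
end

section
/- For the greedy algorithm on a monotone submodular function f with f(∅)=0, after k steps f(S_k) ≥ (1 − (1 − 1/K)^k)·max_{|S|=K} f(S). -/
/-!
Let `c = 1 - 1/K`. Submodularity bounds `f T - f S` by the sum of the gains of the elements of
`T \ S` added to `S` alone, each of which is at most the greedy gain, so `f T ≤ f S + K·gain`.
Hence the gap `OPT - f(S_k)` shrinks by the factor `c` at every step, giving
`f(S_k) ≥ (1 - c^k)·OPT`.
-/

open Finset

theorem one_sub_pow_mul_le_of_le_add_mul_sub {K v : ℝ} (hK : 1 ≤ K) {a : ℕ → ℝ} {n : ℕ}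
    (ha0 : 0 ≤ a 0) (hstep : ∀ k < n, v ≤ a k + K * (a (k + 1) - a k)) :
    ∀ k ≤ n, (1 - (1 - 1 / K) ^ k) * v ≤ a k := by
  have hc : 0 ≤ 1 - 1 / K := sub_nonneg.mpr ((div_le_one (by linarith)).mpr hK)
  intro k hk
  induction k with
  | zero => simpa using ha0
  | succ k ih =>
    have hgap := hstep k hk
    have hprev := mul_le_mul_of_nonneg_left (ih (by omega)) hc
    have hv : v / K ≤ a k / K + (a (k + 1) - a k) := by
      rw [div_add' _ _ _ (by positivity : K ≠ 0), div_le_div_iff_of_pos_right (by positivity)]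
      linarith
    calc (1 - (1 - 1 / K) ^ (k + 1)) * v
        = (1 - 1 / K) * ((1 - (1 - 1 / K) ^ k) * v) + v / K := by ring
      _ ≤ (1 - 1 / K) * a k + (a k / K + (a (k + 1) - a k)) := add_le_add hprev hv
      _ = a (k + 1) := by ring

section Submodular

variable {α : Type*} [DecidableEq α] {f : Finset α → ℝ}

theorem le_add_sum_sdiff_gain
    (hsub : ∀ A B : Finset α, A ⊆ B → ∀ i ∉ B,
      f (insert i B) - f B ≤ f (insert i A) - f A)
    (S T : Finset α) :
    f (S ∪ T) ≤ f S + ∑ e ∈ T \ S, (f (insert e S) - f S) := by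
  induction T using Finset.induction_on with
  | empty => simp
  | @insert a T haT ih =>
    by_cases haS : a ∈ S
    · rwa [union_insert, insert_eq_of_mem (mem_union_left _ haS), insert_sdiff_of_mem _ haS]
    · have hgain := hsub S (S ∪ T) subset_union_left a (by simp [haS, haT])
      rw [union_insert, insert_sdiff_of_notMem _ haS, sum_insert (by simp [haT])]
      linarith

theorem le_add_mul_greedy_gain
    (hmono : ∀ A B : Finset α, A ⊆ B → f A ≤ f B)
    (hsub : ∀ A B : Finset α, A ⊆ B → ∀ i ∉ B,
      f (insert i B) - f B ≤ f (insert i A) - f A)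
    {S : Finset α} {x : α} (hmax : ∀ y ∉ S, f (insert y S) ≤ f (insert x S))
    {K : ℕ} {T : Finset α} (hT : #T ≤ K) :
    f T ≤ f S + K * (f (insert x S) - f S) := by
  have hgain : 0 ≤ f (insert x S) - f S := sub_nonneg.mpr (hmono _ _ (subset_insert x S))
  have hsum : ∑ e ∈ T \ S, (f (insert e S) - f S) ≤ #(T \ S) * (f (insert x S) - f S) := by
    rw [← nsmul_eq_mul]
    exact sum_le_card_nsmul _ _ _ fun e he => sub_le_sub_right (hmax e (mem_sdiff.mp he).2) _
  have hcard : (#(T \ S) : ℝ) ≤ K := by exact_mod_cast (card_le_card sdiff_subset).trans hT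
  calc f T ≤ f (S ∪ T) := hmono _ _ subset_union_right
    _ ≤ f S + ∑ e ∈ T \ S, (f (insert e S) - f S) := le_add_sum_sdiff_gain hsub S T
    _ ≤ f S + K * (f (insert x S) - f S) := by
      gcongr
      exact hsum.trans (mul_le_mul_of_nonneg_right hcard hgain)

end Submodular

theorem greedy_per_iteration_bound_general {α : Type*} [DecidableEq α]
    (f : Finset α → ℝ) (h0 : f ∅ = 0)
    (hmono : ∀ A B : Finset α, A ⊆ B → f A ≤ f B)
    (hsub : ∀ A B : Finset α, A ⊆ B → ∀ i ∉ B,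
      f (insert i B) - f B ≤ f (insert i A) - f A)
    (K : ℕ) (hK : 1 ≤ K) (Sel : ℕ → Finset α) (hSel0 : Sel 0 = ∅)
    (hstep : ∀ k < K, ∃ x ∉ Sel k, Sel (k + 1) = insert x (Sel k) ∧
      ∀ y ∉ Sel k, f (insert y (Sel k)) ≤ f (insert x (Sel k))) :
    ∀ k ≤ K, ∀ T : Finset α, T.card ≤ K →
      (1 - (1 - 1 / (K : ℝ)) ^ k) * f T ≤ f (Sel k) := by
  intro k hk T hT
  refine one_sub_pow_mul_le_of_le_add_mul_sub (a := fun k => f (Sel k)) (by exact_mod_cast hK)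
    (by simp [hSel0, h0]) (fun j hj => ?_) k hk
  obtain ⟨x, -, hnext, hmax⟩ := hstep j hj
  simpa only [hnext] using le_add_mul_greedy_gain hmono hsub hmax hT

/-- Per-iteration greedy bound: after k steps of greedy on a monotone submodular
f with f(∅)=0 and budget K ≥ 1, f(S_k) ≥ (1 − (1 − 1/K)^k)·OPT where
OPT = max_{|T| ≤ K} f(T). -/
theorem greedy_per_iteration_bound {α : Type*} [Fintype α] [DecidableEq α]
    (f : Finset α → ℝ) (h0 : f ∅ = 0)
    (hmono : ∀ A B : Finset α, A ⊆ B → f A ≤ f B)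
    (hsub : ∀ A B : Finset α, A ⊆ B → ∀ i ∉ B,
      f (insert i B) - f B ≤ f (insert i A) - f A)
    (K : ℕ) (hK : 1 ≤ K) (Sel : ℕ → Finset α) (hSel0 : Sel 0 = ∅)
    (hstep : ∀ k < K, ∃ x ∉ Sel k, Sel (k + 1) = insert x (Sel k) ∧
      ∀ y ∉ Sel k, f (insert y (Sel k)) ≤ f (insert x (Sel k))) :
    ∀ k ≤ K, ∀ T : Finset α, T.card ≤ K →
      (1 - (1 - 1 / (K : ℝ)) ^ k) * f T ≤ f (Sel k) :=
  greedy_per_iteration_bound_general f h0 hmono hsub K hK Sel hSel0 hstep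
end

section
/- For any set function H on subsets of finite Z, defining I(S) = H(S) + H(Z\S) − H(Z), submodularity of H implies submodularity of I. -/
/-- For any submodular H (not necessarily monotone), the set function
I(S) = H(S) + H(Z\S) − H(Z) is submodular. -/
theorem symmetrized_submodular {α : Type*} [Fintype α] [DecidableEq α]
    (H : Finset α → ℝ)
    (hsub : ∀ A B : Finset α, A ⊆ B → ∀ i ∉ B,
      H (insert i B) - H B ≤ H (insert i A) - H A)
    (S S' : Finset α) (hSS : S ⊆ S') (i : α) (hi : i ∉ S') :
    (H (insert i S') + H (insert i S')ᶜ - H Finset.univ) -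
        (H S' + H S'ᶜ - H Finset.univ) ≤
      (H (insert i S) + H (insert i S)ᶜ - H Finset.univ) -
        (H S + H Sᶜ - H Finset.univ) := by
  have hiS : i ∉ S := fun h => hi (hSS h)
  have h1 : H (insert i S') - H S' ≤ H (insert i S) - H S :=
    hsub S S' hSS i hi
  have hcomp : (insert i S)ᶜ = Sᶜ.erase i := by
    ext x; simp [Finset.mem_erase, and_comm]
  have hcomp' : (insert i S')ᶜ = S'ᶜ.erase i := by
    ext x; simp [Finset.mem_erase, and_comm]
  have hAB : S'ᶜ.erase i ⊆ Sᶜ.erase i := by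
    intro x hx
    simp only [Finset.mem_erase, Finset.mem_compl] at *
    exact ⟨hx.1, fun h => hx.2 (hSS h)⟩
  have hiB : i ∉ Sᶜ.erase i := by simp
  have h2 := hsub (S'ᶜ.erase i) (Sᶜ.erase i) hAB i hiB
  rw [Finset.insert_erase (by simpa using hiS),
      Finset.insert_erase (by simpa using hi)] at h2
  rw [hcomp, hcomp']
  linarith
end
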